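/- arXiv:2509.20020 — 4 statements merged into one kernel-verified Lean document; each statement's English description precedes it below -/
import Mathlib

section
/- Restricted denesting of einsum: let U = einsum(I₁,…,I_m → I_u; T₁,…,T_m) and V = einsum(I_u, I_{m+1},…,I_{m+n} → I_v; U, T_{m+1},…,T_{m+n}). If the inner and outer expressions share no index symbols except those occurring in I_u (i.e. (⋃_{i≤m} σ(Iᵢ)) ∩ (⋃_{j>m} σ(I_j)) ⊆ σ(I_u)), then V = einsum(I₁,…,I_{m+n} → I_v; T₁,…,T_{m+n}). -/
/-- `occurs Is s` : symbol `s` occurs in one of the input index strings `Is`. -/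
abbrev occurs {S ι : Type*} {o : ι → ℕ} (Is : (i : ι) → Fin (o i) → S) (s : S) : Prop :=
  ∃ i k, Is i k = s

/-- General einsum over a commutative semiring: inputs indexed by `ι`,
index symbols from `S` with axis lengths `d`, input index strings `Is`,
output index string `I` (whose symbols all occur in the inputs, witnessed by `hI`),
and operand tensors `T`.  A tensor of order `o` with index string `J` is represented
as a function from positions `(j : Fin o) → Fin (d (J j))` to `R`.
The sum ranges over global positions, i.e. assignments of values to the
index symbols occurring in the expression. -/
noncomputable def einsum {R S ι : Type*} [CommSemiring R] [Fintype S] [DecidableEq S]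
    [Fintype ι] (d : S → ℕ) {o : ι → ℕ} (Is : (i : ι) → Fin (o i) → S)
    {m : ℕ} (I : Fin m → S) (hI : ∀ j, occurs Is (I j))
    (T : (i : ι) → ((j : Fin (o i)) → Fin (d (Is i j))) → R) :
    ((j : Fin m) → Fin (d (I j))) → R :=
  fun x => ∑ xh : ((s : {s : S // occurs Is s}) → Fin (d s.1)),
    if (fun j => xh ⟨I j, hI j⟩) = x then ∏ i, T i (fun j => xh ⟨Is i j, ⟨i, j, rfl⟩⟩) else 0

/-- Dependent eliminator for sum types, used to combine two families of
index strings / tensors into one family. -/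
def delim {ι κ : Type*} {C : ι ⊕ κ → Sort*} (f : ∀ i, C (.inl i)) (g : ∀ j, C (.inr j)) :
    ∀ x, C x
  | .inl i => f i
  | .inr j => g j

/-- Auxiliary distributivity lemma: an `ite`-guarded product of a guarded sum with a
constant can be pushed inside the sum. -/
lemma ite_sum_mul {R α : Type*} [CommSemiring R] [Fintype α] (p : Prop) [Decidable p]
    (q : α → Prop) [DecidablePred q] (f : α → R) (c : R) :
    (if p then (∑ a : α, if q a then f a else 0) * c else 0)
      = ∑ a : α, if q a then (if p then f a * c else 0) else 0 := by
  split_ifs with h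
  · rw [Finset.sum_mul]; exact Finset.sum_congr rfl fun a _ => by split_ifs <;> simp
  · simp

set_option maxHeartbeats 2000000 in
/-- **Restricted denesting of einsum** (Theorem 4): let
`U = einsum(I₁,…,I_m → I_u; T₁,…,T_m)` and
`V = einsum(I_u, I_{m+1},…,I_{m+n} → I_v; U, T_{m+1},…,T_{m+n})`.
If the inner and outer expressions share no index symbols except those in `I_u`,
then `V = einsum(I₁,…,I_{m+n} → I_v; T₁,…,T_{m+n})`.
Here the inner operands are indexed by `ι`, the remaining outer operands by `κ`. -/
theorem einsum_denest_restricted {R S ι κ : Type*} [CommSemiring R]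
    [Fintype S] [DecidableEq S] [Fintype ι] [Fintype κ] (d : S → ℕ)
    {o : ι → ℕ} (Is : (i : ι) → Fin (o i) → S)
    {o' : κ → ℕ} (Js : (j : κ) → Fin (o' j) → S)
    {du : ℕ} (Iu : Fin du → S) (hU : ∀ j, occurs Is (Iu j))
    {dv : ℕ} (Iv : Fin dv → S)
    (T : (i : ι) → ((k : Fin (o i)) → Fin (d (Is i k))) → R)
    (Ts : (j : κ) → ((k : Fin (o' j)) → Fin (d (Js j k))) → R)
    (hV : ∀ j, occurs (delim (C := fun x => Fin (delim (C := fun _ => ℕ) (fun _ => du) o' x) → S)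
      (fun _ : Unit => Iu) Js) (Iv j))
    (hC : ∀ j, occurs (delim (C := fun x => Fin (Sum.elim o o' x) → S) Is Js) (Iv j))
    (hshare : ∀ s : S, occurs Is s → occurs Js s → ∃ k, Iu k = s) :
    einsum d (delim (C := fun x => Fin (delim (C := fun _ => ℕ) (fun _ => du) o' x) → S)
        (fun _ : Unit => Iu) Js) Iv hV
      (delim (fun _ : Unit => einsum d Is Iu hU T) Ts) =
    einsum d (delim (C := fun x => Fin (Sum.elim o o' x) → S) Is Js) Iv hC (delim T Ts) := by
  classical
  have toB : ∀ s : S, occurs (delim (C := fun x => Fin (Sum.elim o o' x) → S) Is Js) s →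
      ¬ occurs Is s →
      occurs (delim (C := fun x => Fin (delim (C := fun _ => ℕ) (fun _ => du) o' x) → S)
        (fun _ : Unit => Iu) Js) s := by
    rintro s ⟨(i | j), k, e⟩ hn
    · exact absurd ⟨i, k, e⟩ hn
    · exact ⟨Sum.inr j, k, e⟩
  have toC : ∀ s : S,
      occurs (delim (C := fun x => Fin (delim (C := fun _ => ℕ) (fun _ => du) o' x) → S)
        (fun _ : Unit => Iu) Js) s →
      occurs (delim (C := fun x => Fin (Sum.elim o o' x) → S) Is Js) s := by
    rintro s ⟨(u | j), k, e⟩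
    · obtain ⟨i, k', e'⟩ := hU k; exact ⟨Sum.inl i, k', e'.trans e⟩
    · exact ⟨Sum.inr j, k, e⟩
  have toCA : ∀ s : S, occurs Is s →
      occurs (delim (C := fun x => Fin (Sum.elim o o' x) → S) Is Js) s :=
    fun s ⟨i, k, e⟩ => ⟨Sum.inl i, k, e⟩
  funext x
  simp only [einsum, Fintype.prod_sum_type, Fintype.prod_unique, delim]
  simp only [ite_sum_mul]
  trans ∑ z : ((s : {s : S // occurs
        (delim (C := fun x => Fin (delim (C := fun _ => ℕ) (fun _ => du) o' x) → S)
          (fun _ : Unit => Iu) Js) s}) → Fin (d s.1)) ×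
      ((s : {s : S // occurs Is s}) → Fin (d s.1)),
    if (fun j => z.2 ⟨Iu j, hU j⟩) = (fun j => z.1 ⟨Iu j, ⟨Sum.inl (), j, rfl⟩⟩) then
      (if (fun j => z.1 ⟨Iv j, hV j⟩) = x then
        (∏ i : ι, T i fun j => z.2 ⟨Is i j, ⟨i, j, rfl⟩⟩) *
          ∏ k : κ, Ts k fun j => z.1 ⟨Js k j, ⟨Sum.inr k, j, rfl⟩⟩
      else 0) else 0
  · rw [Fintype.sum_prod_type]; rfl
  rw [← Finset.sum_filter]
  refine Finset.sum_nbij'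
    (fun z s => if h : occurs Is s.1 then z.2 ⟨s.1, h⟩ else z.1 ⟨s.1, toB s.1 s.2 h⟩)
    (fun yC => (fun s => yC ⟨s.1, toC s.1 s.2⟩, fun s => yC ⟨s.1, toCA s.1 s.2⟩))
    (fun z _ => Finset.mem_univ _)
    (fun yC _ => Finset.mem_filter.mpr ⟨Finset.mem_univ _, funext fun k => rfl⟩)
    ?_ ?_ ?_
  · -- left inverse
    intro z hz
    obtain ⟨-, hcmp⟩ := Finset.mem_filter.mp hz
    have agree : ∀ (s : S) (hB : _) (hCs : _),
        (if h : occurs Is s then z.2 ⟨s, h⟩ else z.1 ⟨s, toB s hCs h⟩) = z.1 ⟨s, hB⟩ := by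
      intro s hB hCs
      split_ifs with h
      · obtain ⟨k, ek⟩ : ∃ k, Iu k = s := by
          rcases hB with ⟨(u | j), k, e⟩
          · exact ⟨k, e⟩
          · exact hshare s h ⟨j, k, e⟩
        subst ek
        exact congrFun hcmp k
      · rfl
    refine Prod.ext ?_ ?_
    · funext sB; exact agree sB.1 sB.2 (toC sB.1 sB.2)
    · funext sA; exact dif_pos sA.2
  · -- right inverse
    intro yC _
    funext s
    by_cases h : occurs Is s.1
    · exact dif_pos h
    · exact dif_neg h
  · -- values agree
    intro z hz
    obtain ⟨-, hcmp⟩ := Finset.mem_filter.mp hz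
    have agree : ∀ (s : S) (hB : _) (hCs : _),
        (if h : occurs Is s then z.2 ⟨s, h⟩ else z.1 ⟨s, toB s hCs h⟩) = z.1 ⟨s, hB⟩ := by
      intro s hB hCs
      split_ifs with h
      · obtain ⟨k, ek⟩ : ∃ k, Iu k = s := by
          rcases hB with ⟨(u | j), k, e⟩
          · exact ⟨k, e⟩
          · exact hshare s h ⟨j, k, e⟩
        subst ek
        exact congrFun hcmp k
      · rfl
    beta_reduce
    have e1 : (fun j => if h : occurs Is (Iv j) then z.2 ⟨Iv j, h⟩
          else z.1 ⟨Iv j, toB (Iv j) (hC j) h⟩) = fun j => z.1 ⟨Iv j, hV j⟩ :=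
      funext fun j => agree (Iv j) (hV j) (hC j)
    rw [e1]
    by_cases hx : (fun j => z.1 ⟨Iv j, hV j⟩) = x
    · rw [if_pos hx, if_pos hx]
      congr 1
      · refine Finset.prod_congr rfl fun i _ => congrArg (T i) ?_
        refine (funext fun j => ?_).symm
        exact dif_pos ⟨i, j, rfl⟩
      · refine Finset.prod_congr rfl fun k _ => congrArg (Ts k) ?_
        exact (funext fun j => agree (Js k j) ⟨Sum.inr k, j, rfl⟩ ⟨Sum.inr k, j, rfl⟩).symm
    · rw [if_neg hx, if_neg hx]
end

section
/- Associativity of einsum: given tensors T₁,T₂,T₃ with index strings I₁,I₂,I₃, an output string I, and intermediate output strings I₄ with σ(I₄) = (σ(I₁)∪σ(I₂)) ∩ (σ(I₃)∪σ(I)) and I₅ with σ(I₅) = (σ(I₂)∪σ(I₃)) ∩ (σ(I₁)∪σ(I)), it holds that einsum(I₁,I₂,I₃ → I; T₁,T₂,T₃) = einsum(I₄,I₃ → I; einsum(I₁,I₂ → I₄; T₁,T₂), T₃) = einsum(I₁,I₅ → I; T₁, einsum(I₂,I₃ → I₅; T₂,T₃)). -/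
/-!
Both sides of each identity are sums over positions. In a nested expression the inner einsum
sums over positions of the inner symbols that agree with the outer position along the
intermediate string `J`. Every symbol shared by the inner operands and the rest of the expression
lies in `σ(J)`, so such an agreeing pair glues to a unique global position of the flat
expression (`Position.glue`), and the double sum becomes the flat one.
-/

/-- For `P = occurs Is` these are the global positions `x̂` of the paper. -/
abbrev Position {S : Type*} (d : S → ℕ) (P : S → Prop) : Type _ :=
  (s : {s : S // P s}) → Fin (d s.1)

namespace Position

variable {R S : Type*} {d : S → ℕ} {P Q A : S → Prop}

/-- The projection `x̂:J` of a position along an index string `J`. -/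
def proj (x : Position d P) {n : ℕ} (J : Fin n → S) (hJ : ∀ j, P (J j)) :
    (j : Fin n) → Fin (d (J j)) :=
  fun j => x ⟨J j, hJ j⟩

def restrict (h : ∀ s, A s → P s) (x : Position d P) : Position d A :=
  fun s => x ⟨s.1, h s.1 s.2⟩

/-- When `P = A ∪ Q` and `J` enumerates `A ∩ Q`, a position on `P` is the same as a pair of
positions on `Q` and `A` that agree along `J`. -/
def glue [DecidablePred A] (hAP : ∀ s, A s → P s) (hQP : ∀ s, Q s → P s)
    (hPAQ : ∀ s, P s → A s ∨ Q s) {n : ℕ} {J : Fin n → S} (hJA : ∀ j, A (J j))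
    (hJQ : ∀ j, Q (J j)) (hAQJ : ∀ s, A s → Q s → ∃ j, J j = s) :
    Position d P ≃ {p : Position d Q × Position d A // p.2.proj J hJA = p.1.proj J hJQ} where
  toFun x := ⟨(x.restrict hQP, x.restrict hAP), rfl⟩
  invFun p s :=
    if h : A s.1 then p.1.2 ⟨s.1, h⟩ else p.1.1 ⟨s.1, (hPAQ s.1 s.2).resolve_left h⟩
  left_inv x := funext fun s => by
    dsimp only
    split <;> rfl
  right_inv := by
    rintro ⟨⟨y, z⟩, hyz⟩
    refine Subtype.ext (Prod.ext (funext fun s => ?_) (funext fun s => dif_pos s.2))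
    show dite _ _ _ = y s
    split_ifs with h
    · obtain ⟨j, hj⟩ := hAQJ s.1 h s.2
      obtain ⟨s, hs⟩ := s
      subst hj
      exact congrFun hyz j
    · rfl

theorem sum_sum_agree_mul [CommSemiring R] [Fintype S] [DecidableEq S]
    [DecidablePred P] [DecidablePred Q] [DecidablePred A] (hAP : ∀ s, A s → P s)
    (hQP : ∀ s, Q s → P s) (hPAQ : ∀ s, P s → A s ∨ Q s) {n : ℕ} {J : Fin n → S}
    (hJA : ∀ j, A (J j)) (hJQ : ∀ j, Q (J j)) (hAQJ : ∀ s, A s → Q s → ∃ j, J j = s)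
    (F : Position d A → R) (G : Position d Q → R) :
    ∑ y : Position d Q,
        (∑ z : Position d A, if z.proj J hJA = y.proj J hJQ then F z else 0) * G y
      = ∑ x : Position d P, F (x.restrict hAP) * G (x.restrict hQP) := by
  calc _ = ∑ p : Position d Q × Position d A,
        if p.2.proj J hJA = p.1.proj J hJQ then F p.2 * G p.1 else 0 := by
        simp only [Fintype.sum_prod_type, Finset.sum_mul, ite_mul, zero_mul]
    _ = ∑ p : {p : Position d Q × Position d A // p.2.proj J hJA = p.1.proj J hJQ},
        F p.1.2 * G p.1.1 := by
        rw [← Finset.sum_filter]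
        exact Finset.sum_subtype _ (by simp) _
    _ = _ := (Fintype.sum_equiv (glue hAP hQP hPAQ hJA hJQ hAQJ) _ _ fun _ => rfl).symm

end Position

section

variable {S : Type*}

/-- The index-string families of two- and three-operand expressions, spelled exactly as in
`einsum_assoc` so that its terms unify with them. -/
abbrev pairStrings {a b : ℕ} (K : Fin a → S) (L : Fin b → S) :=
  delim (C := fun x => Fin (Sum.elim (fun _ : Unit => a) (fun _ : Unit => b) x) → S)
    (fun _ => K) (fun _ => L)

abbrev tripleStrings {a b c : ℕ} (K : Fin a → S) (L : Fin b → S) (M : Fin c → S) :=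
  delim (C := fun x => Fin (Sum.elim (fun _ : Unit => a)
    (Sum.elim (fun _ : Unit => b) (fun _ : Unit => c)) x) → S)
    (fun _ => K) (delim (fun _ => L) (fun _ => M))

theorem occurs_pairStrings {a b : ℕ} (K : Fin a → S) (L : Fin b → S) (s : S) :
    occurs (pairStrings K L) s ↔ s ∈ Set.range K ∨ s ∈ Set.range L := by
  constructor
  · rintro ⟨_ | _, k, rfl⟩
    exacts [.inl ⟨k, rfl⟩, .inr ⟨k, rfl⟩]
  · rintro (⟨k, rfl⟩ | ⟨k, rfl⟩)
    exacts [⟨.inl (), k, rfl⟩, ⟨.inr (), k, rfl⟩]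

theorem occurs_tripleStrings {a b c : ℕ} (K : Fin a → S) (L : Fin b → S) (M : Fin c → S)
    (s : S) :
    occurs (tripleStrings K L M) s ↔
      s ∈ Set.range K ∨ s ∈ Set.range L ∨ s ∈ Set.range M := by
  constructor
  · rintro ⟨_ | _ | _, k, rfl⟩
    exacts [.inl ⟨k, rfl⟩, .inr (.inl ⟨k, rfl⟩), .inr (.inr ⟨k, rfl⟩)]
  · rintro (⟨k, rfl⟩ | ⟨k, rfl⟩ | ⟨k, rfl⟩)
    exacts [⟨.inl (), k, rfl⟩, ⟨.inr (.inl ()), k, rfl⟩, ⟨.inr (.inr ()), k, rfl⟩]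

variable {R : Type*} [CommSemiring R] [Fintype S] [DecidableEq S]

theorem einsum_apply {ι : Type*} [Fintype ι] (d : S → ℕ) {o : ι → ℕ}
    (Is : (i : ι) → Fin (o i) → S) {m : ℕ} (I : Fin m → S) (hI : ∀ j, occurs Is (I j))
    (T : (i : ι) → ((j : Fin (o i)) → Fin (d (Is i j))) → R)
    (x : (j : Fin m) → Fin (d (I j))) :
    einsum d Is I hI T x = ∑ y : Position d (occurs Is),
      if y.proj I hI = x then ∏ i, T i (y.proj (Is i) fun j => ⟨i, j, rfl⟩) else 0 :=
  rfl

theorem einsum_pair_apply (d : S → ℕ) {a b m : ℕ} (K : Fin a → S) (L : Fin b → S)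
    (I : Fin m → S) (hI : ∀ j, occurs (pairStrings K L) (I j))
    (U : ((j : Fin a) → Fin (d (K j))) → R) (V : ((j : Fin b) → Fin (d (L j))) → R)
    (x : (j : Fin m) → Fin (d (I j))) :
    einsum d (pairStrings K L) I hI (delim (fun _ => U) (fun _ => V)) x =
      ∑ y : Position d (occurs (pairStrings K L)), if y.proj I hI = x then
        U (y.proj K fun j => ⟨.inl (), j, rfl⟩) * V (y.proj L fun j => ⟨.inr (), j, rfl⟩)
      else 0 := by
  simp only [einsum_apply, Fintype.prod_sum_type, Fintype.prod_unique]
  rfl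

theorem einsum_triple_apply (d : S → ℕ) {a b c m : ℕ} (K : Fin a → S) (L : Fin b → S)
    (M : Fin c → S) (I : Fin m → S) (hI : ∀ j, occurs (tripleStrings K L M) (I j))
    (U : ((j : Fin a) → Fin (d (K j))) → R) (V : ((j : Fin b) → Fin (d (L j))) → R)
    (W : ((j : Fin c) → Fin (d (M j))) → R) (x : (j : Fin m) → Fin (d (I j))) :
    einsum d (tripleStrings K L M) I hI (delim (fun _ => U) (delim (fun _ => V) (fun _ => W))) x =
      ∑ y : Position d (occurs (tripleStrings K L M)), if y.proj I hI = x then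
        U (y.proj K fun j => ⟨.inl (), j, rfl⟩) *
          (V (y.proj L fun j => ⟨.inr (.inl ()), j, rfl⟩) *
          W (y.proj M fun j => ⟨.inr (.inr ()), j, rfl⟩)) else 0 := by
  simp only [einsum_apply, Fintype.prod_sum_type, Fintype.prod_unique]
  rfl

theorem einsum_denest_left (d : S → ℕ) {a b c n m : ℕ} (K1 : Fin a → S) (K2 : Fin b → S)
    (K3 : Fin c → S) (J : Fin n → S) (I : Fin m → S)
    (T1 : ((j : Fin a) → Fin (d (K1 j))) → R) (T2 : ((j : Fin b) → Fin (d (K2 j))) → R)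
    (T3 : ((j : Fin c) → Fin (d (K3 j))) → R)
    (hJ : ∀ j, occurs (pairStrings K1 K2) (J j)) (hL : ∀ j, occurs (pairStrings J K3) (I j))
    (hF : ∀ j, occurs (tripleStrings K1 K2 K3) (I j))
    (hcover : (Set.range K1 ∪ Set.range K2) ∩ Set.range K3 ⊆ Set.range J) :
    einsum d (pairStrings J K3) I hL
        (delim (fun _ => einsum d (pairStrings K1 K2) J hJ (delim (fun _ => T1) (fun _ => T2)))
          (fun _ => T3)) =
      einsum d (tripleStrings K1 K2 K3) I hF
        (delim (fun _ => T1) (delim (fun _ => T2) (fun _ => T3))) := by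
  funext x
  have hAP : ∀ s, occurs (pairStrings K1 K2) s → occurs (tripleStrings K1 K2 K3) s := by
    simp only [occurs_pairStrings, occurs_tripleStrings]; tauto
  have hQP : ∀ s, occurs (pairStrings J K3) s → occurs (tripleStrings K1 K2 K3) s := by
    rintro s hs
    rcases (occurs_pairStrings _ _ s).1 hs with ⟨j, rfl⟩ | h
    · exact hAP _ (hJ j)
    · exact (occurs_tripleStrings _ _ _ s).2 (.inr (.inr h))
  have hPAQ : ∀ s, occurs (tripleStrings K1 K2 K3) s →
      occurs (pairStrings K1 K2) s ∨ occurs (pairStrings J K3) s := by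
    simp only [occurs_pairStrings, occurs_tripleStrings]; tauto
  have hAQJ : ∀ s, occurs (pairStrings K1 K2) s → occurs (pairStrings J K3) s →
      ∃ j, J j = s := by
    simp only [occurs_pairStrings]
    rintro s hA (hJs | hK3)
    exacts [hJs, hcover ⟨hA, hK3⟩]
  calc _ = ∑ y : Position d (occurs (pairStrings J K3)),
        (∑ z : Position d (occurs (pairStrings K1 K2)),
          if z.proj J hJ = y.proj J (fun j => ⟨.inl (), j, rfl⟩) then
            T1 (z.proj K1 fun j => ⟨.inl (), j, rfl⟩) *
              T2 (z.proj K2 fun j => ⟨.inr (), j, rfl⟩)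
          else 0) *
        (if y.proj I hL = x then T3 (y.proj K3 fun j => ⟨.inr (), j, rfl⟩) else 0) := by
        simp only [einsum_pair_apply, mul_ite, mul_zero]
    _ = _ := Position.sum_sum_agree_mul hAP hQP hPAQ hJ _ hAQJ _ _
    _ = _ := by
        rw [einsum_triple_apply]
        simp only [mul_ite, mul_zero, mul_assoc]
        rfl

theorem einsum_denest_right (d : S → ℕ) {a b c n m : ℕ} (K1 : Fin a → S) (K2 : Fin b → S)
    (K3 : Fin c → S) (J : Fin n → S) (I : Fin m → S)
    (T1 : ((j : Fin a) → Fin (d (K1 j))) → R) (T2 : ((j : Fin b) → Fin (d (K2 j))) → R)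
    (T3 : ((j : Fin c) → Fin (d (K3 j))) → R)
    (hJ : ∀ j, occurs (pairStrings K2 K3) (J j)) (hR : ∀ j, occurs (pairStrings K1 J) (I j))
    (hF : ∀ j, occurs (tripleStrings K1 K2 K3) (I j))
    (hcover : (Set.range K2 ∪ Set.range K3) ∩ Set.range K1 ⊆ Set.range J) :
    einsum d (pairStrings K1 J) I hR
        (delim (fun _ => T1)
          (fun _ => einsum d (pairStrings K2 K3) J hJ (delim (fun _ => T2) (fun _ => T3)))) =
      einsum d (tripleStrings K1 K2 K3) I hF
        (delim (fun _ => T1) (delim (fun _ => T2) (fun _ => T3))) := by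
  funext x
  have hAP : ∀ s, occurs (pairStrings K2 K3) s → occurs (tripleStrings K1 K2 K3) s := by
    simp only [occurs_pairStrings, occurs_tripleStrings]; tauto
  have hQP : ∀ s, occurs (pairStrings K1 J) s → occurs (tripleStrings K1 K2 K3) s := by
    rintro s hs
    rcases (occurs_pairStrings _ _ s).1 hs with h | ⟨j, rfl⟩
    · exact (occurs_tripleStrings _ _ _ s).2 (.inl h)
    · exact hAP _ (hJ j)
  have hPAQ : ∀ s, occurs (tripleStrings K1 K2 K3) s →
      occurs (pairStrings K2 K3) s ∨ occurs (pairStrings K1 J) s := by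
    simp only [occurs_pairStrings, occurs_tripleStrings]; tauto
  have hAQJ : ∀ s, occurs (pairStrings K2 K3) s → occurs (pairStrings K1 J) s →
      ∃ j, J j = s := by
    simp only [occurs_pairStrings]
    rintro s hA (hK1 | hJs)
    exacts [hcover ⟨hA, hK1⟩, hJs]
  calc _ = ∑ y : Position d (occurs (pairStrings K1 J)),
        (∑ z : Position d (occurs (pairStrings K2 K3)),
          if z.proj J hJ = y.proj J (fun j => ⟨.inr (), j, rfl⟩) then
            T2 (z.proj K2 fun j => ⟨.inl (), j, rfl⟩) *
              T3 (z.proj K3 fun j => ⟨.inr (), j, rfl⟩)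
          else 0) *
        (if y.proj I hR = x then T1 (y.proj K1 fun j => ⟨.inl (), j, rfl⟩) else 0) := by
        simp only [einsum_pair_apply, mul_ite, mul_zero]
        exact Finset.sum_congr rfl fun y _ => if_congr Iff.rfl (mul_comm _ _) rfl
    _ = _ := Position.sum_sum_agree_mul hAP hQP hPAQ hJ _ hAQJ _ _
    _ = _ := by
        rw [einsum_triple_apply]
        simp only [mul_ite, mul_zero]
        exact Finset.sum_congr rfl fun y _ => if_congr Iff.rfl (mul_comm _ _) rfl

end

/-- **Associativity of einsum** (Theorem 2): given tensors `T₁,T₂,T₃` with index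
strings `I₁,I₂,I₃`, an output string `I`, and intermediate output strings `I₄`
with `σ(I₄) = (σ(I₁)∪σ(I₂)) ∩ (σ(I₃)∪σ(I))` and `I₅` with
`σ(I₅) = (σ(I₂)∪σ(I₃)) ∩ (σ(I₁)∪σ(I))`, the flat expression
`einsum(I₁,I₂,I₃ → I; T₁,T₂,T₃)` equals both nested expressions
`einsum(I₄,I₃ → I; einsum(I₁,I₂ → I₄; T₁,T₂), T₃)` and
`einsum(I₁,I₅ → I; T₁, einsum(I₂,I₃ → I₅; T₂,T₃))`. -/
theorem einsum_assoc {R S : Type*} [CommSemiring R] [Fintype S] [DecidableEq S]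
    (d : S → ℕ) {o1 o2 o3 m m4 m5 : ℕ}
    (I1 : Fin o1 → S) (I2 : Fin o2 → S) (I3 : Fin o3 → S)
    (I : Fin m → S) (I4 : Fin m4 → S) (I5 : Fin m5 → S)
    (T1 : ((j : Fin o1) → Fin (d (I1 j))) → R)
    (T2 : ((j : Fin o2) → Fin (d (I2 j))) → R)
    (T3 : ((j : Fin o3) → Fin (d (I3 j))) → R)
    (h4 : Set.range I4 = (Set.range I1 ∪ Set.range I2) ∩ (Set.range I3 ∪ Set.range I))
    (h5 : Set.range I5 = (Set.range I2 ∪ Set.range I3) ∩ (Set.range I1 ∪ Set.range I))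
    (hF : ∀ j, occurs (delim (C := fun x => Fin (Sum.elim (fun _ : Unit => o1)
        (Sum.elim (fun _ : Unit => o2) (fun _ : Unit => o3)) x) → S)
        (fun _ => I1) (delim (fun _ => I2) (fun _ => I3))) (I j))
    (hI4 : ∀ j, occurs (delim (C := fun x => Fin (Sum.elim (fun _ : Unit => o1)
        (fun _ : Unit => o2) x) → S) (fun _ => I1) (fun _ => I2)) (I4 j))
    (hI5 : ∀ j, occurs (delim (C := fun x => Fin (Sum.elim (fun _ : Unit => o2)
        (fun _ : Unit => o3) x) → S) (fun _ => I2) (fun _ => I3)) (I5 j))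
    (hL : ∀ j, occurs (delim (C := fun x => Fin (Sum.elim (fun _ : Unit => m4)
        (fun _ : Unit => o3) x) → S) (fun _ => I4) (fun _ => I3)) (I j))
    (hR : ∀ j, occurs (delim (C := fun x => Fin (Sum.elim (fun _ : Unit => o1)
        (fun _ : Unit => m5) x) → S) (fun _ => I1) (fun _ => I5)) (I j)) :
    einsum d (delim (C := fun x => Fin (Sum.elim (fun _ : Unit => o1)
        (Sum.elim (fun _ : Unit => o2) (fun _ : Unit => o3)) x) → S)
        (fun _ => I1) (delim (fun _ => I2) (fun _ => I3))) I hF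
        (delim (fun _ => T1) (delim (fun _ => T2) (fun _ => T3)))
      = einsum d (delim (C := fun x => Fin (Sum.elim (fun _ : Unit => m4)
          (fun _ : Unit => o3) x) → S) (fun _ => I4) (fun _ => I3)) I hL
          (delim (fun _ => einsum d (delim (C := fun x => Fin (Sum.elim (fun _ : Unit => o1)
            (fun _ : Unit => o2) x) → S) (fun _ => I1) (fun _ => I2)) I4 hI4
            (delim (fun _ => T1) (fun _ => T2))) (fun _ => T3))
    ∧
    einsum d (delim (C := fun x => Fin (Sum.elim (fun _ : Unit => o1)
        (Sum.elim (fun _ : Unit => o2) (fun _ : Unit => o3)) x) → S)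
        (fun _ => I1) (delim (fun _ => I2) (fun _ => I3))) I hF
        (delim (fun _ => T1) (delim (fun _ => T2) (fun _ => T3)))
      = einsum d (delim (C := fun x => Fin (Sum.elim (fun _ : Unit => o1)
          (fun _ : Unit => m5) x) → S) (fun _ => I1) (fun _ => I5)) I hR
          (delim (fun _ => T1) (fun _ => einsum d (delim (C := fun x =>
            Fin (Sum.elim (fun _ : Unit => o2) (fun _ : Unit => o3) x) → S)
            (fun _ => I2) (fun _ => I3)) I5 hI5 (delim (fun _ => T2) (fun _ => T3)))) := by
  refine ⟨(einsum_denest_left d I1 I2 I3 I4 I T1 T2 T3 hI4 hL hF ?_).symm,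
    (einsum_denest_right d I1 I2 I3 I5 I T1 T2 T3 hI5 hR hF ?_).symm⟩
  · rw [h4]
    exact Set.inter_subset_inter_right _ Set.subset_union_left
  · rw [h5]
    exact Set.inter_subset_inter_right _ Set.subset_union_left
end

section
/- Delta split preserves semantics: let E = einsum(I₁,…,Iₙ → I; T₁,…,Tₙ), let a be a symbol occurring in some Iᵢ and b a fresh symbol with d_b = d_a, and let Î₁,…,Îₙ,Î be obtained from I₁,…,Iₙ,I by replacing an arbitrary subset of the occurrences of a with b. Then einsum(ab, Î₁,…,Îₙ → Î; δ₁, T₁,…,Tₙ) = E, where δ₁ is the d_a×d_a unit matrix (Kronecker delta). -/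
/-- Transporting an assignment application along an equality of symbols. -/
theorem ds_apply_val_congr {S : Type*} (d : S → ℕ) (P : S → Prop)
    (f : (s : {s : S // P s}) → Fin (d s.1)) {s t : S} (h : s = t)
    (hs : P s) (ht : P t) : (f ⟨s, hs⟩ : ℕ) = (f ⟨t, ht⟩ : ℕ) := by subst h; rfl

/-- Forward map: extend an assignment on `P`-symbols by a value for `b`. -/
noncomputable def dsFwd {S : Type*} [DecidableEq S] (d : S → ℕ) (P Q : S → Prop) (b : S)
    (hPQ : ∀ s, Q s → s ≠ b → P s)
    (p : ((s : {s : S // P s}) → Fin (d s.1)) × Fin (d b)) :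
    (s : {s : S // Q s}) → Fin (d s.1) :=
  fun s => if hsb : s.1 = b then Fin.cast (by rw [hsb]) p.2
    else p.1 ⟨s.1, hPQ s.1 s.2 hsb⟩

theorem dsFwd_val_ne {S : Type*} [DecidableEq S] (d : S → ℕ) (P Q : S → Prop) (b : S)
    (hPQ : ∀ s, Q s → s ≠ b → P s)
    (p : ((s : {s : S // P s}) → Fin (d s.1)) × Fin (d b))
    (s : {s : S // Q s}) (hsb : s.1 ≠ b) :
    (dsFwd d P Q b hPQ p s : ℕ) = (p.1 ⟨s.1, hPQ s.1 s.2 hsb⟩ : ℕ) := by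
  simp only [dsFwd, dif_neg hsb]

theorem dsFwd_val_eq {S : Type*} [DecidableEq S] (d : S → ℕ) (P Q : S → Prop) (b : S)
    (hPQ : ∀ s, Q s → s ≠ b → P s)
    (p : ((s : {s : S // P s}) → Fin (d s.1)) × Fin (d b))
    (s : {s : S // Q s}) (hsb : s.1 = b) :
    (dsFwd d P Q b hPQ p s : ℕ) = (p.2 : ℕ) := by
  simp only [dsFwd, dif_pos hsb, Fin.coe_cast]

/-- **Delta split preserves semantics** (Theorem 5, split direction): let
`E = einsum(I₁,…,Iₙ → I; T₁,…,Tₙ)`, let `a` occur in some `Iᵢ` and `b` be a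
fresh symbol with `d b = d a`, and let `Î₁,…,Îₙ,Î` be obtained by replacing an
arbitrary subset of the occurrences of `a` by `b`.  Then
`einsum(ab, Î₁,…,Îₙ → Î; δ₁, T₁,…,Tₙ) = E` (positions are transported along the
equality of axis lengths `d (Î j) = d (I j)`). -/
theorem einsum_delta_split {R S ι : Type*} [CommSemiring R] [Fintype S]
    [DecidableEq S] [Fintype ι] (d : S → ℕ) (a b : S) (hab : a ≠ b)
    (hd : d a = d b)
    {o : ι → ℕ} (Is : (i : ι) → Fin (o i) → S)
    {m : ℕ} (I : Fin m → S) (hI : ∀ j, occurs Is (I j))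
    (T : (i : ι) → ((k : Fin (o i)) → Fin (d (Is i k))) → R)
    (ha : occurs Is a)
    (hbfresh : ∀ i k, Is i k ≠ b) (hbfreshI : ∀ j, I j ≠ b)
    (Ish : (i : ι) → Fin (o i) → S) (Ih : Fin m → S)
    (hrepl : ∀ i k, Ish i k = Is i k ∨ (Is i k = a ∧ Ish i k = b))
    (hreplI : ∀ j, Ih j = I j ∨ (I j = a ∧ Ih j = b))
    (hcast : ∀ i k, d (Ish i k) = d (Is i k))
    (hcastI : ∀ j, d (Ih j) = d (I j))
    (hIh : ∀ j, occurs (delim (C := fun x => Fin (Sum.elim (fun _ : Unit => 2) o x) → S)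
      (fun _ => fun k : Fin 2 => if k.val = 0 then a else b) Ish) (Ih j)) :
    ∀ x : (j : Fin m) → Fin (d (I j)),
      einsum d (delim (C := fun x => Fin (Sum.elim (fun _ : Unit => 2) o x) → S)
          (fun _ => fun k : Fin 2 => if k.val = 0 then a else b) Ish) Ih hIh
          (delim (fun _ => fun p : (k : Fin 2) → Fin (d (if (k : Fin 2).val = 0 then a else b)) => if ((p 0 : ℕ) = (p 1 : ℕ)) then (1 : R) else 0)
            (fun i => fun p => T i (fun k => Fin.cast (hcast i k) (p k))))
          (fun j => Fin.cast (hcastI j).symm (x j))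
        = einsum d Is I hI T x := by
  classical
  intro x
  set Is' : (i : Unit ⊕ ι) → Fin (Sum.elim (fun _ : Unit => 2) o i) → S :=
    delim (C := fun x => Fin (Sum.elim (fun _ : Unit => 2) o x) → S)
      (fun _ => fun k : Fin 2 => if k.val = 0 then a else b) Ish with hIs'
  set T' := delim (C := fun i => ((k : Fin (Sum.elim (fun _ : Unit => 2) o i)) →
        Fin (d (Is' i k))) → R)
      (fun _ => fun p : (k : Fin 2) → Fin (d (if (k : Fin 2).val = 0 then a else b)) =>
        if ((p 0 : ℕ) = (p 1 : ℕ)) then (1 : R) else 0)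
      (fun i => fun p => T i (fun k => Fin.cast (hcast i k) (p k))) with hT'
  have hIl0 : Is' (Sum.inl ()) ((0 : Fin 2)) = a := rfl
  have hIl1 : Is' (Sum.inl ()) ((1 : Fin 2)) = b := rfl
  have occA : occurs Is' a := ⟨Sum.inl (), (0 : Fin 2), hIl0⟩
  have occB : occurs Is' b := ⟨Sum.inl (), (1 : Fin 2), hIl1⟩
  have occ_of : ∀ s : S, occurs Is s → occurs Is' s := by
    intro s hs
    by_cases hsa : s = a
    · exact hsa ▸ occA
    · obtain ⟨i, k, hk⟩ := hs
      rcases hrepl i k with h | ⟨h1, h2⟩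
      · exact ⟨Sum.inr i, k, h.trans hk⟩
      · exact absurd (hk.symm.trans h1) hsa
  have of_occ : ∀ s : S, occurs Is' s → s ≠ b → occurs Is s := by
    rintro s ⟨i, k, hk⟩ hsb
    match i with
    | Sum.inl u =>
      simp only [hIs', delim] at hk
      split at hk
      · exact hk ▸ ha
      · exact absurd hk.symm hsb
    | Sum.inr i =>
      rcases hrepl i k with h | ⟨h1, h2⟩
      · exact ⟨i, k, h.symm.trans hk⟩
      · exact absurd (hk.symm.trans h2) hsb
  have left : Function.LeftInverse
      (fun xh : (s : {s : S // occurs Is' s}) → Fin (d s.1) =>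
        ((fun s => xh ⟨s.1, occ_of s.1 s.2⟩, xh ⟨b, occB⟩) :
          ((s : {s : S // occurs Is s}) → Fin (d s.1)) × Fin (d b)))
      (dsFwd d (occurs Is) (occurs Is') b of_occ) := by
    rintro ⟨xh', v⟩
    refine Prod.ext ?_ ?_
    · funext s
      have hsb : s.1 ≠ b := by
        intro h
        obtain ⟨i, k, hk⟩ := s.2
        exact hbfresh i k (hk.trans h)
      show dsFwd d (occurs Is) (occurs Is') b of_occ (xh', v) ⟨s.1, occ_of s.1 s.2⟩ = xh' s
      simp only [dsFwd, dif_neg hsb]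
    · show dsFwd d (occurs Is) (occurs Is') b of_occ (xh', v) ⟨b, occB⟩ = v
      simp only [dsFwd, dif_pos]
      exact Fin.ext rfl
  have right : Function.RightInverse
      (fun xh : (s : {s : S // occurs Is' s}) → Fin (d s.1) =>
        ((fun s => xh ⟨s.1, occ_of s.1 s.2⟩, xh ⟨b, occB⟩) :
          ((s : {s : S // occurs Is s}) → Fin (d s.1)) × Fin (d b)))
      (dsFwd d (occurs Is) (occurs Is') b of_occ) := by
    intro xh
    funext s
    obtain ⟨sv, hsv⟩ := s
    by_cases hsb : sv = b
    · subst hsb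
      simp only [dsFwd, dif_pos]
      exact Fin.ext rfl
    · simp only [dsFwd, dif_neg hsb]
  simp only [einsum]
  rw [← Equiv.sum_comp
      (⟨dsFwd d (occurs Is) (occurs Is') b of_occ, _, left, right⟩ :
        (((s : {s : S // occurs Is s}) → Fin (d s.1)) × Fin (d b)) ≃
          ((s : {s : S // occurs Is' s}) → Fin (d s.1))),
    Fintype.sum_prod_type]
  simp only [Equiv.coe_fn_mk]
  refine Finset.sum_congr rfl fun xh' _ => ?_
  have hfact : ∀ v : Fin (d b),
      (∏ i : Unit ⊕ ι, T' i (fun k =>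
          dsFwd d (occurs Is) (occurs Is') b of_occ (xh', v) ⟨Is' i k, ⟨i, k, rfl⟩⟩))
        = (if ((xh' ⟨a, ha⟩ : ℕ) = (v : ℕ)) then (1 : R) else 0) *
          ∏ i : ι, T' (Sum.inr i) (fun k =>
            dsFwd d (occurs Is) (occurs Is') b of_occ (xh', v)
              ⟨Is' (Sum.inr i) k, ⟨Sum.inr i, k, rfl⟩⟩) := by
    intro v
    rw [Fintype.prod_sum_type]
    congr 1
    rw [Fintype.prod_unique]
    have h0 : (dsFwd d (occurs Is) (occurs Is') b of_occ (xh', v)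
        ⟨Is' (Sum.inl ()) ((0 : Fin 2)), ⟨Sum.inl (), (0 : Fin 2), rfl⟩⟩ : ℕ) = (xh' ⟨a, ha⟩ : ℕ) := by
      rw [dsFwd_val_ne d (occurs Is) (occurs Is') b of_occ (xh', v) _
        (fun hc => hab (hIl0.symm.trans hc))]
      exact ds_apply_val_congr d _ xh' hIl0 _ ha
    have h1 : (dsFwd d (occurs Is) (occurs Is') b of_occ (xh', v)
        ⟨Is' (Sum.inl ()) ((1 : Fin 2)), ⟨Sum.inl (), (1 : Fin 2), rfl⟩⟩ : ℕ) = (v : ℕ) :=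
      dsFwd_val_eq d (occurs Is) (occurs Is') b of_occ (xh', v) _ hIl1
    show (if ((dsFwd d (occurs Is) (occurs Is') b of_occ (xh', v)
          ⟨Is' (Sum.inl ()) ((0 : Fin 2)), ⟨Sum.inl (), (0 : Fin 2), rfl⟩⟩ : ℕ)
        = (dsFwd d (occurs Is) (occurs Is') b of_occ (xh', v)
          ⟨Is' (Sum.inl ()) ((1 : Fin 2)), ⟨Sum.inl (), (1 : Fin 2), rfl⟩⟩ : ℕ)) then (1 : R) else 0) = _
    rw [h0, h1]
  rw [Fintype.sum_eq_single (Fin.cast hd (xh' ⟨a, ha⟩))]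
  · have hprod : (∏ i : ι, T' (Sum.inr i) (fun k =>
        dsFwd d (occurs Is) (occurs Is') b of_occ (xh', Fin.cast hd (xh' ⟨a, ha⟩))
          ⟨Is' (Sum.inr i) k, ⟨Sum.inr i, k, rfl⟩⟩))
        = ∏ i : ι, T i (fun k => xh' ⟨Is i k, ⟨i, k, rfl⟩⟩) := by
      refine Finset.prod_congr rfl fun i _ => ?_
      show T i (fun k => Fin.cast (hcast i k)
          (dsFwd d (occurs Is) (occurs Is') b of_occ (xh', Fin.cast hd (xh' ⟨a, ha⟩))
            ⟨Is' (Sum.inr i) k, ⟨Sum.inr i, k, rfl⟩⟩)) = _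
      congr 1
      funext k
      refine Fin.ext ?_
      change ((dsFwd d (occurs Is) (occurs Is') b of_occ (xh', Fin.cast hd (xh' ⟨a, ha⟩))
        ⟨Is' (Sum.inr i) k, ⟨Sum.inr i, k, rfl⟩⟩ : Fin _) : ℕ) = _
      rcases hrepl i k with h | ⟨h1, h2⟩
      · have hkb : (Is' (Sum.inr i) k) ≠ b := by
          show Ish i k ≠ b
          rw [h]; exact hbfresh i k
        rw [dsFwd_val_ne d (occurs Is) (occurs Is') b of_occ _ _ hkb]
        exact ds_apply_val_congr d _ xh' (show Is' (Sum.inr i) k = Is i k from h) _ _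
      · rw [dsFwd_val_eq d (occurs Is) (occurs Is') b of_occ _ _
          (show (⟨Is' (Sum.inr i) k, ⟨Sum.inr i, k, rfl⟩⟩ :
            {s : S // occurs Is' s}).1 = b from h2), Fin.coe_cast]
        exact ds_apply_val_congr d _ xh' h1.symm ha _
    have hcond : ((fun j => dsFwd d (occurs Is) (occurs Is') b of_occ
          (xh', Fin.cast hd (xh' ⟨a, ha⟩)) ⟨Ih j, hIh j⟩)
          = fun j => Fin.cast (hcastI j).symm (x j))
        ↔ ((fun j => xh' ⟨I j, hI j⟩) = x) := by
      rw [funext_iff, funext_iff]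
      refine forall_congr' fun j => ?_
      rw [Fin.ext_iff, Fin.ext_iff, Fin.coe_cast]
      rcases hreplI j with h | ⟨h1, h2⟩
      · have hjb : Ih j ≠ b := by rw [h]; exact hbfreshI j
        rw [dsFwd_val_ne d (occurs Is) (occurs Is') b of_occ _ _ hjb,
          ds_apply_val_congr d _ xh' h _ (hI j)]
      · rw [dsFwd_val_eq d (occurs Is) (occurs Is') b of_occ _ _ h2, Fin.coe_cast,
          ds_apply_val_congr d _ xh' h1.symm ha (hI j)]
    rw [hfact]
    have hpos : ((xh' ⟨a, ha⟩ : ℕ) = ((Fin.cast hd (xh' ⟨a, ha⟩) : Fin (d b)) : ℕ)) := rfl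
    rw [if_pos hpos, one_mul]
    exact if_congr hcond hprod rfl
  · intro v hv
    have hne : ¬ ((xh' ⟨a, ha⟩ : ℕ) = (v : ℕ)) := by
      intro h
      exact hv (Fin.ext h.symm)
    rw [hfact, if_neg hne, zero_mul, ite_self]
end

section
/- Delta merge preserves semantics: let F = einsum(ab, I₁,…,Iₙ → I; δ₁, T₁,…,Tₙ) where δ₁ is a unit matrix with index string (a,b), a ≠ b, and suppose a occurs in at least one of I₁,…,Iₙ. Let I'₁,…,I'ₙ,I' be obtained by replacing every occurrence of b with a. Then F = einsum(I'₁,…,I'ₙ → I'; T₁,…,Tₙ). -/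
/-- value of an assignment only depends on the symbol, not the occurrence proof. -/
lemma val_congr {S : Type*} {d : S → ℕ} {P : S → Prop}
    (zh : (s : {s : S // P s}) → Fin (d s.1)) {s s' : S} (h : s = s')
    (h1 : P s) (h2 : P s') : (zh ⟨s, h1⟩ : ℕ) = (zh ⟨s', h2⟩ : ℕ) := by subst h; rfl

/-- Extend an assignment for the merged expression to one for the delta expression. -/
def extfun {S : Type*} [DecidableEq S] (d : S → ℕ) (a b : S) (hd : d a = d b)
    (P Q : S → Prop) (hQa : Q a) (h21 : ∀ s, P s → s ≠ b → Q s)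
    (yh : (s : {s : S // Q s}) → Fin (d s.1)) : (s : {s : S // P s}) → Fin (d s.1) :=
  fun t => if hb : t.1 = b then Fin.cast (by rw [hb]; exact hd) (yh ⟨a, hQa⟩)
    else yh ⟨t.1, h21 t.1 t.2 hb⟩

lemma extfun_val_b {S : Type*} [DecidableEq S] {d : S → ℕ} {a b : S} {hd : d a = d b}
    {P Q : S → Prop} {hQa : Q a} {h21 : ∀ s, P s → s ≠ b → Q s}
    {yh : (s : {s : S // Q s}) → Fin (d s.1)} {t : {s : S // P s}} (hb : t.1 = b) :
    (extfun d a b hd P Q hQa h21 yh t : ℕ) = (yh ⟨a, hQa⟩ : ℕ) := by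
  simp only [extfun]; rw [dif_pos hb]; rfl

lemma extfun_val_ne {S : Type*} [DecidableEq S] {d : S → ℕ} {a b : S} {hd : d a = d b}
    {P Q : S → Prop} {hQa : Q a} {h21 : ∀ s, P s → s ≠ b → Q s}
    {yh : (s : {s : S // Q s}) → Fin (d s.1)} {t : {s : S // P s}} (hb : t.1 ≠ b) :
    extfun d a b hd P Q hQa h21 yh t = yh ⟨t.1, h21 t.1 t.2 hb⟩ := by
  simp only [extfun]; rw [dif_neg hb]

/-- **Delta merge preserves semantics** (Theorem 5, merge direction): let
`F = einsum(ab, I₁,…,Iₙ → I; δ₁, T₁,…,Tₙ)` where `δ₁` is a unit matrix with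
index string `(a,b)`, `a ≠ b`, and `a` occurs in at least one of `I₁,…,Iₙ`.
Replacing every occurrence of `b` by `a` (the renaming `ren`) yields
`F = einsum(I'₁,…,I'ₙ → I'; T₁,…,Tₙ)` (positions transported along the
equality of axis lengths). -/
theorem einsum_delta_merge {R S ι : Type*} [CommSemiring R] [Fintype S]
    [DecidableEq S] [Fintype ι] (d : S → ℕ) (a b : S) (hab : a ≠ b)
    (hd : d a = d b)
    {o : ι → ℕ} (Is : (i : ι) → Fin (o i) → S)
    {m : ℕ} (I : Fin m → S)
    (T : (i : ι) → ((k : Fin (o i)) → Fin (d (Is i k))) → R)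
    (ha : occurs Is a)
    (hc : ∀ i k, d (if Is i k = b then a else Is i k) = d (Is i k))
    (hcI : ∀ j, d (if I j = b then a else I j) = d (I j))
    (hIF : ∀ j, occurs (delim (C := fun x => Fin (Sum.elim (fun _ : Unit => 2) o x) → S)
      (fun _ => fun k : Fin 2 => if k.val = 0 then a else b) Is) (I j))
    (hI' : ∀ j, occurs (fun i => fun k => if Is i k = b then a else Is i k)
      (if I j = b then a else I j)) :
    ∀ x : (j : Fin m) → Fin (d (I j)),
      einsum d (delim (C := fun x => Fin (Sum.elim (fun _ : Unit => 2) o x) → S)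
          (fun _ => fun k : Fin 2 => if k.val = 0 then a else b) Is) I hIF
          (delim (fun _ => fun p : (k : Fin 2) → Fin (d (if (k : Fin 2).val = 0 then a else b)) => if ((p 0 : ℕ) = (p 1 : ℕ)) then (1 : R) else 0) T) x
        = einsum d (fun i => fun k => if Is i k = b then a else Is i k)
            (fun j => if I j = b then a else I j) hI'
            (fun i => fun p => T i (fun k => Fin.cast (hc i k) (p k)))
            (fun j => Fin.cast (hcI j).symm (x j)) := by
  intro x
  classical
  -- notation
  set Is' := delim (C := fun x => Fin (Sum.elim (fun _ : Unit => 2) o x) → S)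
      (fun _ => fun k : Fin 2 => if k.val = 0 then a else b) Is with hIs'
  set ren : (i : ι) → (k : Fin (o i)) → S := fun i k => if Is i k = b then a else Is i k
    with hren
  set P : S → Prop := fun s => occurs Is' s with hP
  set Q : S → Prop := fun s => occurs ren s with hQ
  have hQA : Q a := by
    obtain ⟨i, k, hk⟩ := ha
    exact ⟨i, k, by show (if Is i k = b then a else Is i k) = a; rw [hk, ite_self]⟩
  have hQP : ∀ s, Q s → P s := by
    rintro s ⟨i, k, hk⟩
    by_cases hb : Is i k = b
    · have hsa : s = a := by
        rw [← hk]
        show (if Is i k = b then a else Is i k) = a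
        rw [if_pos hb]
      refine ⟨Sum.inl (), (0 : Fin 2), ?_⟩
      show (if (0 : Fin 2).val = 0 then a else b) = s
      simp [hsa]
    · refine ⟨Sum.inr i, k, ?_⟩
      show Is i k = s
      rw [← hk]; show Is i k = (if Is i k = b then a else Is i k); rw [if_neg hb]
  have hPQ : ∀ s, P s → s ≠ b → Q s := by
    rintro s ⟨i, k, hk⟩ hsb
    cases i with
    | inl u =>
      by_cases h0 : (k : Fin 2).val = 0
      · have hsa : s = a := by
          rw [← hk]; show (if (k : Fin 2).val = 0 then a else b) = a; rw [if_pos h0]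
        exact hsa ▸ hQA
      · exfalso; apply hsb
        rw [← hk]; show (if (k : Fin 2).val = 0 then a else b) = b; rw [if_neg h0]
    | inr i =>
      have h1 : Is i k = s := hk
      refine ⟨i, k, ?_⟩
      show (if Is i k = b then a else Is i k) = s
      rw [h1, if_neg hsb]
  have hQb : ∀ s, Q s → s ≠ b := by
    rintro s ⟨i, k, hk⟩ heq
    rw [heq] at hk
    have hk' : (if Is i k = b then a else Is i k) = b := hk
    by_cases hb : Is i k = b
    · rw [if_pos hb] at hk'
      exact hab hk'
    · rw [if_neg hb] at hk'
      exact hb hk'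
  -- proofs that a and b occur in the delta expression
  have Pa : P a := ⟨Sum.inl (), (0 : Fin 2), by show (if (0 : Fin 2).val = 0 then a else b) = a; simp⟩
  have Pb : P b := ⟨Sum.inl (), (1 : Fin 2), by show (if (1 : Fin 2).val = 0 then a else b) = b; simp⟩
  -- the key pointwise computation
  have key : ∀ (yh : (s : {s : S // Q s}) → Fin (d s.1)) (s : S) (hp : P s)
      (hq : Q (if s = b then a else s)),
      (extfun d a b hd P Q hQA hPQ yh ⟨s, hp⟩ : ℕ) = (yh ⟨if s = b then a else s, hq⟩ : ℕ) := by
    intro yh s hp hq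
    by_cases hb : s = b
    · rw [extfun_val_b hb]
      exact val_congr yh (show a = (if s = b then a else s) by rw [if_pos hb]) hQA hq
    · rw [extfun_val_ne hb]
      exact val_congr yh (show s = (if s = b then a else s) by rw [if_neg hb]) _ hq
  simp only [einsum]
  symm
  refine Finset.sum_of_injOn (extfun d a b hd P Q hQA hPQ) ?_ ?_ ?_ ?_
  · -- injectivity
    intro yh _ yh' _ h
    funext t
    have hb : t.1 ≠ b := hQb t.1 t.2
    have h1 := congrFun h ⟨t.1, hQP t.1 t.2⟩
    have e1 : extfun d a b hd P Q hQA hPQ yh ⟨t.1, hQP t.1 t.2⟩ = yh t :=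
      extfun_val_ne (t := ⟨t.1, hQP t.1 t.2⟩) hb
    have e2 : extfun d a b hd P Q hQA hPQ yh' ⟨t.1, hQP t.1 t.2⟩ = yh' t :=
      extfun_val_ne (t := ⟨t.1, hQP t.1 t.2⟩) hb
    exact e1.symm.trans (h1.trans e2)
  · intro yh _; simp
  · -- terms outside the image vanish
    intro xh _ hnot
    by_cases heq : (xh ⟨a, Pa⟩ : ℕ) = (xh ⟨b, Pb⟩ : ℕ)
    · exfalso
      apply hnot
      refine ⟨fun t => xh ⟨t.1, hQP t.1 t.2⟩, Finset.mem_coe.mpr (Finset.mem_univ _), ?_⟩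
      funext t
      by_cases hb : t.1 = b
      · apply Fin.ext
        rw [extfun_val_b hb]
        calc ((fun t => xh ⟨t.1, hQP t.1 t.2⟩) (⟨a, hQA⟩ : {s : S // Q s}) : ℕ)
            = (xh ⟨a, Pa⟩ : ℕ) := rfl
          _ = (xh ⟨b, Pb⟩ : ℕ) := heq
          _ = (xh t : ℕ) := val_congr xh hb.symm Pb t.2
      · rw [extfun_val_ne hb]
    · -- the delta factor is zero
      by_cases hcnd : (fun j => xh ⟨I j, hIF j⟩) = x
      · rw [if_pos hcnd, Fintype.prod_sum_type]
        simp only [Fintype.prod_unique]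
        simp only [delim]
        refine mul_eq_zero_of_left ?_ _
        refine ite_eq_right_iff.mpr ?_
        intro hcon
        exfalso
        apply heq
        exact (val_congr xh (show a = (if ((0 : Fin 2) : ℕ) = 0 then a else b) by simp)
            Pa _).trans (hcon.trans (val_congr xh
            (show (if ((1 : Fin 2) : ℕ) = 0 then a else b) = b by simp) _ Pb))
      · rw [if_neg hcnd]
  · -- terms match along the injection
    intro yh _
    set xh := extfun d a b hd P Q hQA hPQ yh with hxh
    have hcond : ((fun j => yh ⟨if I j = b then a else I j, hI' j⟩)
          = fun j => Fin.cast (hcI j).symm (x j))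
        ↔ ((fun j => xh ⟨I j, hIF j⟩) = x) := by
      rw [funext_iff, funext_iff]
      apply forall_congr'
      intro j
      rw [Fin.ext_iff, Fin.ext_iff, Fin.coe_cast, key yh (I j) (hIF j) (hI' j)]
    rw [if_congr hcond rfl rfl]
    by_cases hcnd : (fun j => xh ⟨I j, hIF j⟩) = x
    · rw [if_pos hcnd, if_pos hcnd, Fintype.prod_sum_type]
      simp only [Fintype.prod_unique]
      simp only [delim]
      have hva : (xh ⟨a, Pa⟩ : ℕ) = (yh ⟨a, hQA⟩ : ℕ) :=
        congrArg Fin.val (extfun_val_ne (t := ⟨a, Pa⟩) hab)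
      have hvb : (xh ⟨b, Pb⟩ : ℕ) = (yh ⟨a, hQA⟩ : ℕ) :=
        extfun_val_b (t := ⟨b, Pb⟩) rfl
      have hcon : (xh ⟨if ((0 : Fin 2) : ℕ) = 0 then a else b,
            ⟨Sum.inl (), (0 : Fin 2), rfl⟩⟩ : ℕ)
          = (xh ⟨if ((1 : Fin 2) : ℕ) = 0 then a else b,
            ⟨Sum.inl (), (1 : Fin 2), rfl⟩⟩ : ℕ) :=
        (val_congr xh (show (if ((0 : Fin 2) : ℕ) = 0 then a else b) = a by simp) _ Pa).trans
          (hva.trans (hvb.symm.trans (val_congr xh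
            (show b = (if ((1 : Fin 2) : ℕ) = 0 then a else b) by simp) Pb _)))
      refine Eq.trans ?_ ((congrArg (fun r : R => r * _) (if_pos hcon)).trans (one_mul _)).symm
      refine Finset.prod_congr rfl fun i _ => ?_
      refine congrArg _ (funext fun k => Fin.ext ?_)
      rw [Fin.coe_cast]
      exact (key yh (Is i k) ⟨Sum.inr i, k, rfl⟩ ⟨i, k, rfl⟩).symm
    · rw [if_neg hcnd, if_neg hcnd]
end
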